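/- Let X be a topological space, 𝓕 a family of subsets of X, and λ an infinite cardinal. For every cardinal δ let X^δ denote the δ-th power of X with the product (Tychonoff) topology, and let 𝓕^δ be the family of all subsets of X^δ of the form ∏_{β<δ} F_β with each F_β ∈ 𝓕. Then there exists an ultrafilter D uniform over λ such that X is 𝓕-D-compact if and only if, for every cardinal δ, the space X^δ satisfies 𝓕^δ-CAP*_λ. -/

import Mathlib

open Cardinal Set Topology

universe u

/-- `x` is a `lam`-complete accumulation point of the sequence `Y`. -/
def IsCompleteAccPt {X : Type u} [TopologicalSpace X] (lam : Cardinal.{u})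
    {ι : Type u} (Y : ι → Set X) (x : X) : Prop :=
  ∀ U ∈ nhds x, #{i : ι | (Y i ∩ U).Nonempty} = lam

/-- `X` satisfies `𝓕`-CAP*_λ. -/
def CapStar {X : Type u} [TopologicalSpace X] (F : Set (Set X)) (lam : Cardinal.{u}) : Prop :=
  ∀ Y : lam.ord.ToType → Set X, (∀ i, Y i ∈ F) → ∃ x : X, IsCompleteAccPt lam Y x

/-- `x` is a `D`-limit point of the family `Y`. -/
def IsDLimit {X : Type u} [TopologicalSpace X] {Z : Type v} (D : Ultrafilter Z)
    (Y : Z → Set X) (x : X) : Prop :=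
  ∀ U ∈ nhds x, {z : Z | (Y z ∩ U).Nonempty} ∈ D

/-- `X` is `𝓕`-`D`-compact: every `Z`-indexed family of members of `𝓕` has a `D`-limit point. -/
def FDCompact {X : Type u} [TopologicalSpace X] {Z : Type v} (F : Set (Set X))
    (D : Ultrafilter Z) : Prop :=
  ∀ Y : Z → Set X, (∀ z, Y z ∈ F) → ∃ x : X, IsDLimit D Y x

/-- The family of all products of `δ` members of `𝓕`, as subsets of the power `X^δ`. -/
def PowFamily {X : Type u} (F : Set (Set X)) (δ : Cardinal.{u}) :
    Set (Set (δ.ord.ToType → X)) :=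
  {s | ∃ f : δ.ord.ToType → Set X, (∀ β, f β ∈ F) ∧ s = Set.pi Set.univ f}

/-! Members of `𝓕` are nonempty when `X` is `𝓕`-`D`-compact, so `D`-limits of the coordinates
give a `D`-limit in `X^δ` of any family of products; for uniform `D`, a `D`-limit of a
`λ`-indexed family is a `λ`-complete accumulation point since the sets witnessing it lie in `D`.
Conversely, code all `λ`-sequences of members of `𝓕` as the coordinates of a single `λ`-sequence of
products in `X^δ`, `δ = #(λ → 𝓕)`, and take a `λ`-complete accumulation point `x` of it. The sets
`{α | Y_α ∩ U ≠ ∅}`, `U` a neighbourhood of `x`, all have cardinality `λ`, so together with the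
complements of sets of size `< λ` they generate a proper filter; any ultrafilter `D` containing it
is uniform, and each coordinate of `x` is a `D`-limit of the corresponding sequence. -/

open Filter

section DLimit

variable {X : Type u} [TopologicalSpace X] {Z : Type*} {D : Ultrafilter Z}

theorem FDCompact.nonempty_of_mem {F : Set (Set X)} (hF : FDCompact F D) {s : Set X}
    (hs : s ∈ F) : s.Nonempty := by
  obtain ⟨x, hx⟩ := hF (fun _ => s) fun _ => hs
  obtain ⟨_, hz⟩ := (D : Filter Z).nonempty_of_mem (hx univ univ_mem)
  exact hz.mono inter_subset_left

theorem IsDLimit.pi {ι : Type u} {Y : Z → ι → Set X} (hne : ∀ z i, (Y z i).Nonempty)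
    {x : ι → X} (hx : ∀ i, IsDLimit D (fun z => Y z i) (x i)) :
    IsDLimit D (fun z => univ.pi (Y z)) x := by
  intro V hV
  rw [nhds_pi] at hV
  obtain ⟨I, hI, t, ht, htV⟩ := Filter.mem_pi.1 hV
  refine mem_of_superset ((biInter_mem hI).2 fun i _ => hx i (t i) (ht i)) fun z hz => ?_
  simp only [mem_iInter] at hz
  have hpoint : ∀ i, ∃ y ∈ Y z i, i ∈ I → y ∈ t i := fun i =>
    (em (i ∈ I)).elim (fun hi => (hz i hi).imp fun _ hy => ⟨hy.1, fun _ => hy.2⟩)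
      fun hi => (hne z i).imp fun _ hy => ⟨hy, fun h => absurd h hi⟩
  choose y hyY hyt using hpoint
  exact ⟨y, fun i _ => hyY i, htV hyt⟩

theorem FDCompact.powFamily {F : Set (Set X)} (hF : FDCompact F D) (δ : Cardinal.{u}) :
    FDCompact (PowFamily F δ) D := by
  intro Y hY
  choose f hf hYf using hY
  choose x hx using fun β => hF (fun z => f z β) fun z => hf z β
  rw [show Y = fun z => univ.pi (f z) from funext hYf]
  exact ⟨x, IsDLimit.pi (fun z β => hF.nonempty_of_mem (hf z β)) hx⟩

theorem IsDLimit.of_mapsTo {X' : Type*} [TopologicalSpace X'] {Y : Z → Set X}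
    {Y' : Z → Set X'} {g : X → X'} {x : X} (hx : IsDLimit D Y x) (hg : ContinuousAt g x)
    (hYY' : ∀ z, MapsTo g (Y z) (Y' z)) : IsDLimit D Y' (g x) := fun _ hU =>
  mem_of_superset (hx _ (hg.preimage_mem_nhds hU)) fun _ ⟨y, hyY, hyU⟩ =>
    ⟨g y, hYY' _ hyY, hyU⟩

theorem FDCompact.capStar {lam : Cardinal.{u}} {G : Set (Set X)}
    {D : Ultrafilter lam.ord.ToType} (hD : ∀ A ∈ D, #A = lam) (hG : FDCompact G D) :
    CapStar G lam := fun Y hY =>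
  (hG Y hY).imp fun _ hx U hU => hD _ (hx U hU)

end DLimit

theorem exists_ultrafilter_le_forall_le_mk {ι : Type u} {lam : Cardinal.{u}} (hlam : ℵ₀ ≤ lam)
    {L : Filter ι} (hL : ∀ A ∈ L, lam ≤ #A) : ∃ D : Ultrafilter ι, ↑D ≤ L ∧ ∀ A ∈ D, lam ≤ #A := by
  let C : Filter ι := comk (fun s => #s < lam) (by simpa using aleph0_pos.trans_le hlam)
    (fun _ ht _ hst => (mk_le_mk_of_subset hst).trans_lt ht)
    (fun _ hs _ ht => (mk_union_le _ _).trans_lt (add_lt_of_lt hlam hs ht))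
  have : NeBot (L ⊓ C) := inf_neBot_iff.2 fun A hA B hB =>
    not_disjoint_iff_nonempty_inter.1 fun hAB =>
      (hL A hA).not_gt ((mk_le_mk_of_subset hAB.subset_compl_right).trans_lt hB)
  refine ⟨Ultrafilter.of (L ⊓ C), (Ultrafilter.of_le _).trans inf_le_left, fun A hA => ?_⟩
  by_contra! hsmall
  have hAc : Aᶜ ∈ C := by simpa [C] using hsmall
  exact (Ultrafilter.of (L ⊓ C)).empty_notMem (by
    simpa using inter_mem hA ((Ultrafilter.of_le _).trans inf_le_right hAc))

theorem IsCompleteAccPt.exists_ultrafilter_isDLimit {X : Type u} [TopologicalSpace X]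
    {lam : Cardinal.{u}} (hlam : ℵ₀ ≤ lam) {ι : Type u} {Y : ι → Set X} {x : X}
    (hx : IsCompleteAccPt lam Y x) :
    ∃ D : Ultrafilter ι, (∀ A ∈ D, lam ≤ #A) ∧ IsDLimit D Y x := by
  let hits : Set X → Set ι := fun U => {i | (Y i ∩ U).Nonempty}
  have hmono : Monotone hits := fun _ _ hUV _ ⟨y, hyY, hyU⟩ => ⟨y, hyY, hUV hyU⟩
  obtain ⟨D, hDL, hD⟩ := exists_ultrafilter_le_forall_le_mk hlam (L := (𝓝 x).lift' hits)
    fun A hA => by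
      obtain ⟨U, hU, hUA⟩ := (mem_lift'_sets hmono).1 hA
      exact (hx U hU).symm.le.trans (mk_le_mk_of_subset hUA)
  exact ⟨D, hD, fun U hU => hDL (mem_lift' hU)⟩

theorem exists_uniform_fdCompact_of_capStar {X : Type u} [TopologicalSpace X] {F : Set (Set X)}
    {lam : Cardinal.{u}} (hlam : ℵ₀ ≤ lam)
    (hcap : CapStar (PowFamily F #(lam.ord.ToType → F)) lam) :
    ∃ D : Ultrafilter lam.ord.ToType, (∀ A ∈ D, #A = lam) ∧ FDCompact F D := by
  obtain ⟨e⟩ := Cardinal.eq.1 (mk_ord_toType #(lam.ord.ToType → F))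
  obtain ⟨x, hx⟩ := hcap (fun α => univ.pi fun β => (e β α : Set X))
    fun α => ⟨_, fun β => (e β α).2, rfl⟩
  obtain ⟨D, hD, hxD⟩ := hx.exists_ultrafilter_isDLimit hlam
  refine ⟨D, fun A hA => ((mk_set_le A).trans (mk_ord_toType lam).le).antisymm (hD A hA),
    fun Y hY => ?_⟩
  set β := e.symm fun α => ⟨Y α, hY α⟩
  refine ⟨x β, hxD.of_mapsTo (continuous_apply β).continuousAt fun α y hy => ?_⟩
  simpa [β] using hy β (mem_univ _)

theorem stmt12 {X : Type u} [TopologicalSpace X] (F : Set (Set X)) (lam : Cardinal.{u})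
    (hlam : Cardinal.aleph0 ≤ lam) :
    (∃ D : Ultrafilter lam.ord.ToType, (∀ A ∈ D, #A = lam) ∧ FDCompact F D) ↔
      ∀ δ : Cardinal.{u}, CapStar (PowFamily F δ) lam := by
  constructor
  · rintro ⟨D, hD, hF⟩ δ
    exact (hF.powFamily δ).capStar hD
  · exact fun hcap => exists_uniform_fdCompact_of_capStar hlam (hcap _)
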